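/- Under the CMES sampling setup, the regret of the conditional multinomial empirical success rule satisfies 0 ≤ U_{M*} − u ≤ (1/2)·e^{−1/2}·Σ_{k≠M*} {Σ_{l=1}^{L} p_l²·(A_{kl} + A_{M*l})}^{1/2}. -/

import Mathlib

/-!
Without ties exactly one index wins almost surely, so the regret is
`U M - u = ∑_{k ≠ M} P(k wins) (U M - U k)`, and `k` can only win on `{Û M ≤ Û k}`.
The difference `Û k - Û M` is a linear combination of independent `[0, 1]`-valued samples, so
its mean is `-(U M - U k)` and its variance `v` is at most `¼ ∑_l p_l² (A k l + A M l)`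
(Popoviciu). Cantelli's inequality then bounds each term by `Δ v / (v + Δ²) ≤ √v / 2` with
`Δ = U M - U k`, and `√v / 2 ≤ ¼ √(∑_l p_l² (A k l + A M l))`, while `¼ ≤ ½ e^{-1/2}`.
-/

open MeasureTheory ProbabilityTheory Finset

namespace ProbabilityTheory

noncomputable def sampleMean {Ω : Type*} (n : ℕ) (Y : ℕ → Ω → ℝ) (ω : Ω) : ℝ :=
  (n : ℝ)⁻¹ * ∑ i ∈ range n, Y i ω

noncomputable def stratifiedMean {Ω α : Type*} (s : Finset α) (c : α → ℝ) (n : α → ℕ)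
    (Y : α → ℕ → Ω → ℝ) (ω : Ω) : ℝ :=
  ∑ a ∈ s, c a * sampleMean (n a) (Y a) ω

theorem stratifiedMean_eq_sum_sigma {Ω α : Type*} (s : Finset α) (c : α → ℝ) (n : α → ℕ)
    (Y : α → ℕ → Ω → ℝ) (ω : Ω) :
    stratifiedMean s c n Y ω = ∑ x ∈ s.sigma fun a => range (n a), c x.1 / n x.1 * Y x.1 x.2 ω := by
  simp only [stratifiedMean, sum_sigma, sampleMean, mul_sum, div_eq_mul_inv, mul_assoc]

variable {Ω : Type*} [MeasurableSpace Ω] {P : Measure Ω}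

theorem memLp_stratifiedMean {α : Type*} {Y : α → ℕ → Ω → ℝ} (hY : ∀ a i, MemLp (Y a i) 2 P)
    (s : Finset α) (c : α → ℝ) (n : α → ℕ) : MemLp (stratifiedMean s c n Y) 2 P := by
  simp only [funext (stratifiedMean_eq_sum_sigma s c n Y)]
  exact memLp_finsetSum _ fun (x : Σ _ : α, ℕ) _ => (hY x.1 x.2).const_mul _

theorem integral_stratifiedMean {α : Type*} {Y : α → ℕ → Ω → ℝ}
    (hY : ∀ a i, Integrable (Y a i) P) {μ : α → ℝ} (hmean : ∀ a i, P[Y a i] = μ a)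
    (s : Finset α) (c : α → ℝ) {n : α → ℕ} (hn : ∀ a ∈ s, n a ≠ 0) :
    P[stratifiedMean s c n Y] = ∑ a ∈ s, c a * μ a := by
  simp only [stratifiedMean_eq_sum_sigma]
  rw [integral_finsetSum _ fun (x : Σ _ : α, ℕ) _ => (hY x.1 x.2).const_mul _, sum_sigma]
  refine sum_congr rfl fun a ha => ?_
  simp only [integral_const_mul, hmean, sum_const, card_range, nsmul_eq_mul]
  field_simp [Nat.cast_ne_zero.2 (hn a ha)]

variable [IsProbabilityMeasure P]

theorem measureReal_ge_le_variance_div_add_sq {X : Ω → ℝ} (hX : MemLp X 2 P) {t : ℝ}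
    (ht : 0 < t) :
    P.real {ω | t ≤ X ω - P[X]} ≤ variance X P / (variance X P + t ^ 2) := by
  set v := variance X P
  -- Markov's inequality for `(X - E X + s) ^ 2`, with the optimal shift `s = v / t`
  set s := v / t
  have hs : 0 ≤ s := div_nonneg (variance_nonneg X P) ht.le
  set Z : Ω → ℝ := fun ω => X ω + (s - P[X])
  have hZ : MemLp Z 2 P := hX.add (memLp_const _)
  have hZ_mean : P[Z] = s := by
    simp [Z, integral_add (hX.integrable one_le_two) (integrable_const _)]
  have hZ_sq : P[Z ^ 2] = v + s ^ 2 := by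
    have := variance_eq_sub hZ
    rw [variance_add_const hX.aestronglyMeasurable, hZ_mean] at this
    linarith
  have hsub : {ω | t ≤ X ω - P[X]} ⊆ {ω | (t + s) ^ 2 ≤ (Z ^ 2) ω} := fun ω (hω : t ≤ X ω - P[X]) =>
    show (t + s) ^ 2 ≤ (X ω + (s - P[X])) ^ 2 from pow_le_pow_left₀ (by positivity) (by linarith) 2
  have hmarkov := mul_meas_ge_le_integral_of_nonneg
    (Filter.Eventually.of_forall fun ω => sq_nonneg (Z ω)) hZ.integrable_sq ((t + s) ^ 2)
  have hbound : (t + s) ^ 2 * P.real {ω | t ≤ X ω - P[X]} ≤ v + s ^ 2 :=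
    (mul_le_mul_of_nonneg_left (measureReal_mono hsub) (sq_nonneg _)).trans (hZ_sq ▸ hmarkov)
  calc _ ≤ (v + s ^ 2) / (t + s) ^ 2 := (le_div_iff₀ (by positivity)).2 (by linarith [hbound])
    _ = v / (v + t ^ 2) := by
      have : 0 < v + t ^ 2 := add_pos_of_nonneg_of_pos (variance_nonneg X P) (by positivity)
      rw [div_eq_div_iff (pow_ne_zero 2 (by linarith)) this.ne']
      simp only [s]
      field_simp
      ring

theorem measureReal_nonneg_mul_neg_integral_le {X : Ω → ℝ} (hX : MemLp X 2 P) :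
    P.real {ω | 0 ≤ X ω} * -P[X] ≤ √(variance X P) / 2 := by
  set v := variance X P
  rcases le_or_gt (-P[X]) 0 with ht | ht
  · exact (mul_nonpos_of_nonneg_of_nonpos measureReal_nonneg ht).trans (by positivity)
  have hset : {ω | 0 ≤ X ω} = {ω | -P[X] ≤ X ω - P[X]} := by simp
  have hv : 0 ≤ v := variance_nonneg X P
  calc _ ≤ v / (v + (-P[X]) ^ 2) * -P[X] := by
        rw [hset]
        exact mul_le_mul_of_nonneg_right (measureReal_ge_le_variance_div_add_sq hX ht) ht.le
    _ ≤ √v / 2 := by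
      -- AM-GM: `2 t √v ≤ v + t ^ 2` for `t = -E X`
      rw [div_mul_eq_mul_div, div_le_div_iff₀ (by positivity) two_pos]
      nlinarith [sq_nonneg (√v + P[X]), Real.sq_sqrt hv, Real.sqrt_nonneg v]

theorem measureReal_le_mul_integral_sub_le {X Y : Ω → ℝ} (hX : MemLp X 2 P)
    (hY : MemLp Y 2 P) :
    P.real {ω | Y ω ≤ X ω} * (P[Y] - P[X]) ≤ √(variance (X - Y) P) / 2 := by
  have h := measureReal_nonneg_mul_neg_integral_le (hX.sub hY)
  simp only [Pi.sub_apply, sub_nonneg] at h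
  rwa [integral_sub (hX.integrable one_le_two) (hY.integrable one_le_two), neg_sub] at h

theorem variance_sum_mul_le_of_bounded {ι : Type*} {Y : ι → Ω → ℝ} (hY : iIndepFun Y P)
    (hmeas : ∀ i, AEMeasurable (Y i) P) {a b : ℝ} (hbd : ∀ i, ∀ᵐ ω ∂P, Y i ω ∈ Set.Icc a b)
    (s : Finset ι) (c : ι → ℝ) :
    variance (fun ω => ∑ i ∈ s, c i * Y i ω) P ≤ ((b - a) / 2) ^ 2 * ∑ i ∈ s, c i ^ 2 := by
  have hsum : (fun ω => ∑ i ∈ s, c i * Y i ω) = ∑ i ∈ s, fun ω => c i * Y i ω := by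
    ext ω; simp
  rw [hsum, IndepFun.variance_sum
    (fun i _ => (memLp_of_bounded (hbd i) (hmeas i).aestronglyMeasurable 2).const_mul (c i))
    (fun i _ j _ hij => (hY.indepFun hij).comp (measurable_const_mul _) (measurable_const_mul _)),
    mul_sum]
  refine sum_le_sum fun i _ => ?_
  rw [variance_const_mul, mul_comm]
  exact mul_le_mul_of_nonneg_right (variance_le_sq_of_bounded (hbd i) (hmeas i)) (sq_nonneg _)

theorem variance_stratifiedMean_le {α : Type*} {Y : α → ℕ → Ω → ℝ}
    (hY : iIndepFun (fun x : α × ℕ => Y x.1 x.2) P) (hmeas : ∀ x i, AEMeasurable (Y x i) P)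
    {a b : ℝ} (hbd : ∀ x i, ∀ᵐ ω ∂P, Y x i ω ∈ Set.Icc a b) (s : Finset α) (c : α → ℝ)
    (n : α → ℕ) :
    variance (stratifiedMean s c n Y) P ≤ ((b - a) / 2) ^ 2 * ∑ x ∈ s, c x ^ 2 / n x := by
  simp only [funext (stratifiedMean_eq_sum_sigma s c n Y)]
  have hY' : iIndepFun (fun x : (Σ _ : α, ℕ) => Y x.1 x.2) P :=
    hY.precomp (g := fun x : (Σ _ : α, ℕ) => (x.1, x.2)) fun x y h => by
      obtain ⟨_, _⟩ := x; obtain ⟨_, _⟩ := y; cases h; rfl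
  refine (variance_sum_mul_le_of_bounded hY' (fun x => hmeas x.1 x.2) (fun x => hbd x.1 x.2)
    _ _).trans_eq ?_
  rw [sum_sigma]
  refine congrArg _ (sum_congr rfl fun x _ => ?_)
  rcases eq_or_ne (n x) 0 with hx | hx
  · simp [hx]
  · simp only [sum_const, card_range, nsmul_eq_mul]
    field_simp [Nat.cast_ne_zero.2 hx]

theorem variance_stratifiedMean_sub_le {ι β : Type*} [DecidableEq ι]
    {Y : ι → β → ℕ → Ω → ℝ} (hY : iIndepFun (fun x : (ι × β) × ℕ => Y x.1.1 x.1.2 x.2) P)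
    (hmeas : ∀ j r i, AEMeasurable (Y j r i) P) {a b : ℝ}
    (hbd : ∀ j r i, ∀ᵐ ω ∂P, Y j r i ω ∈ Set.Icc a b) (s : Finset β) (w : ι → β → ℝ)
    (n : ι → β → ℕ) {k M : ι} (hkM : k ≠ M) :
    variance (stratifiedMean s (w k) (n k) (Y k) - stratifiedMean s (w M) (n M) (Y M)) P
      ≤ ((b - a) / 2) ^ 2 * ∑ r ∈ s, (w k r ^ 2 / n k r + w M r ^ 2 / n M r) := by
  set c : ι × β → ℝ := fun x => (if x.1 = k then 1 else -1) * w x.1 x.2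
  have hdiff : stratifiedMean ({k, M} ×ˢ s) c (fun x => n x.1 x.2) (fun x => Y x.1 x.2)
      = stratifiedMean s (w k) (n k) (Y k) - stratifiedMean s (w M) (n M) (Y M) := by
    ext ω
    simp [c, stratifiedMean, sum_product, sum_pair hkM, hkM.symm, sub_eq_add_neg]
  have h := variance_stratifiedMean_le (Y := fun x : ι × β => Y x.1 x.2) hY
    (fun x => hmeas x.1 x.2) (fun x => hbd x.1 x.2) ({k, M} ×ˢ s) c (fun x => n x.1 x.2)
  rw [hdiff] at h
  simpa only [c, sum_product, sum_pair hkM, if_pos, if_neg hkM.symm, one_mul, neg_mul, neg_sq,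
    ← sum_add_distrib] using h

theorem measureReal_stratifiedMean_le_mul_sub_le {ι β : Type*} [DecidableEq ι]
    {Y : ι → β → ℕ → Ω → ℝ} (hY : iIndepFun (fun x : (ι × β) × ℕ => Y x.1.1 x.1.2 x.2) P)
    (hmeas : ∀ j r i, AEMeasurable (Y j r i) P) {a b : ℝ}
    (hbd : ∀ j r i, ∀ᵐ ω ∂P, Y j r i ω ∈ Set.Icc a b) {μ : ι → β → ℝ}
    (hmean : ∀ j r i, P[Y j r i] = μ j r) (s : Finset β) (w : ι → β → ℝ) {n : ι → β → ℕ}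
    (hn : ∀ j, ∀ r ∈ s, n j r ≠ 0) {k M : ι} (hkM : k ≠ M) :
    P.real {ω | stratifiedMean s (w M) (n M) (Y M) ω ≤ stratifiedMean s (w k) (n k) (Y k) ω}
        * (∑ r ∈ s, w M r * μ M r - ∑ r ∈ s, w k r * μ k r)
      ≤ |b - a| / 4 * √(∑ r ∈ s, (w k r ^ 2 / n k r + w M r ^ 2 / n M r)) := by
  have hY2 : ∀ j r i, MemLp (Y j r i) 2 P := fun j r i =>
    memLp_of_bounded (hbd j r i) (hmeas j r i).aestronglyMeasurable 2
  have hF_mean : ∀ j, P[stratifiedMean s (w j) (n j) (Y j)] = ∑ r ∈ s, w j r * μ j r :=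
    fun j => integral_stratifiedMean (fun r i => (hY2 j r i).integrable one_le_two) (hmean j)
      s (w j) (hn j)
  calc _ ≤ √(variance (stratifiedMean s (w k) (n k) (Y k)
          - stratifiedMean s (w M) (n M) (Y M)) P) / 2 := by
        rw [← hF_mean, ← hF_mean]
        exact measureReal_le_mul_integral_sub_le (memLp_stratifiedMean (hY2 k) _ _ _)
          (memLp_stratifiedMean (hY2 M) _ _ _)
    _ ≤ √(((b - a) / 2) ^ 2 * ∑ r ∈ s, (w k r ^ 2 / n k r + w M r ^ 2 / n M r)) / 2 := by
        gcongr
        exact variance_stratifiedMean_sub_le hY hmeas hbd s w n hkM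
    _ = _ := by
        rw [Real.sqrt_mul (sq_nonneg _), Real.sqrt_sq_eq_abs, abs_div, abs_two]
        ring

theorem sum_measureReal_forall_lt_eq_one {ι : Type*} [Fintype ι] [Nonempty ι]
    {V : ι → Ω → ℝ} (hV : ∀ i, Measurable (V i))
    (hties : ∀ i j, i ≠ j → P {ω | V i ω = V j ω} = 0) :
    ∑ k, P.real {ω | ∀ j, j ≠ k → V j ω < V k ω} = 1 := by
  set E : ι → Set Ω := fun k => {ω | ∀ j, j ≠ k → V j ω < V k ω}
  have hE : ∀ k, MeasurableSet (E k) := fun k => by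
    simp only [E, Set.ofPred_forall]
    exact .iInter fun j => .iInter fun _ => measurableSet_lt (hV j) (hV k)
  have hdisj : Pairwise (Function.onFun Disjoint E) := fun i j hij =>
    Set.disjoint_left.2 fun ω hi hj => lt_asymm (hi j hij.symm) (hj i hij)
  -- off the union of the events, the maximum of `V · ω` is attained twice
  have hcompl : (⋃ k, E k)ᶜ ⊆ ⋃ i, ⋃ j, ⋃ (_ : i ≠ j), {ω | V i ω = V j ω} := fun ω hω => by
    obtain ⟨k, -, hk⟩ := exists_max_image univ (V · ω) univ_nonempty
    simp only [Set.mem_compl_iff, Set.mem_iUnion, not_exists] at hω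
    obtain ⟨j, hjk, hlt⟩ : ∃ j, j ≠ k ∧ ¬V j ω < V k ω := by simpa [E] using hω k
    exact Set.mem_iUnion.2 ⟨j, Set.mem_iUnion.2 ⟨k, Set.mem_iUnion.2
      ⟨hjk, le_antisymm (hk j (mem_univ _)) (not_lt.1 hlt)⟩⟩⟩
  have hnull : P (⋃ k, E k)ᶜ = 0 := measure_mono_null hcompl <|
    measure_iUnion_null fun i => measure_iUnion_null fun j => measure_iUnion_null (hties i j)
  rw [← measureReal_iUnion_fintype hdisj hE, measureReal_def,
    (prob_compl_eq_zero_iff (.iUnion hE)).1 hnull, ENNReal.toReal_one]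

end ProbabilityTheory

theorem Finset.sub_sum_mul_eq_sum_erase_mul_sub {ι R : Type*} [Fintype ι] [DecidableEq ι]
    [CommRing R] {w : ι → R} (hw : ∑ k, w k = 1) (x : ι → R) (M : ι) :
    x M - ∑ k, w k * x k = ∑ k ∈ univ.erase M, w k * (x M - x k) := by
  rw [sum_erase _ (by simp)]
  simp only [mul_sub, sum_sub_distrib, ← sum_mul, hw, one_mul]

theorem one_div_four_le_half_mul_exp_neg_half : (1 / 4 : ℝ) ≤ 1 / 2 * Real.exp (-(1 / 2)) := by
  linarith [Real.add_one_le_exp (-(1 / 2))]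

noncomputable def cmesWeight {L : ℕ} (p π : Fin L → ℝ) (r : Fin 2 × Fin L) : ℝ :=
  p r.2 * ![1 - π r.2, π r.2] r.1

theorem sum_cmesWeight_mul {L : ℕ} (p π : Fin L → ℝ) (f : Fin 2 → Fin L → ℝ) :
    ∑ r, cmesWeight p π r * f r.1 r.2 = ∑ l, p l * ((1 - π l) * f 0 l + π l * f 1 l) := by
  simp [cmesWeight, Fintype.sum_prod_type, Fin.sum_univ_two, ← sum_add_distrib, mul_add,
    mul_assoc]

theorem sum_cmesWeight_sq_div {L : ℕ} (p π : Fin L → ℝ) (N : Fin 2 → Fin L → ℕ) :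
    ∑ r, cmesWeight p π r ^ 2 / N r.1 r.2
      = ∑ l, p l ^ 2 * ((1 - π l) ^ 2 / N 0 l + π l ^ 2 / N 1 l) := by
  simp [cmesWeight, Fintype.sum_prod_type, Fin.sum_univ_two, ← sum_add_distrib, mul_add,
    mul_pow, mul_div_assoc]

theorem cmes_regret_bound_general
    {Ω : Type*} [MeasurableSpace Ω] (P : Measure Ω) [IsProbabilityMeasure P]
    (L : ℕ)
    (p : Fin L → ℝ)
    (m : ℕ)
    (π : Fin m → Fin L → ℝ)
    (N : Fin m → Fin 2 → Fin L → ℕ) (hN : ∀ k t l, 1 ≤ N k t l)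
    (Y : Fin m → Fin 2 → Fin L → ℕ → Ω → ℝ)
    (hmeas : ∀ k t l i, Measurable (Y k t l i))
    (hrange : ∀ k t l i ω, Y k t l i ω ∈ Set.Icc (0 : ℝ) 1)
    (μ : Fin m → Fin 2 → Fin L → ℝ)
    (hmean : ∀ k t l i, ∫ ω, Y k t l i ω ∂P = μ k t l)
    (hindep : iIndepFun
      (fun q : Fin m × Fin 2 × Fin L × ℕ => Y q.1 q.2.1 q.2.2.1 q.2.2.2) P)
    (Uhat : Fin m → Ω → ℝ)
    (hUhat : ∀ k ω, Uhat k ω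
      = ∑ l, p l *
          ((1 - π k l) * ((N k 0 l : ℝ)⁻¹ * ∑ i ∈ Finset.range (N k 0 l), Y k 0 l i ω)
            + π k l * ((N k 1 l : ℝ)⁻¹ * ∑ i ∈ Finset.range (N k 1 l), Y k 1 l i ω)))
    (U : Fin m → ℝ)
    (hU : ∀ k, U k = ∑ l, p l * ((1 - π k l) * μ k 0 l + π k l * μ k 1 l))
    (A : Fin m → Fin L → ℝ)
    (hA : ∀ k l, A k l = (1 - π k l) ^ 2 / (N k 0 l : ℝ) + (π k l) ^ 2 / (N k 1 l : ℝ))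
    (u : ℝ)
    (hu : u = ∑ k, (P {ω | ∀ j, j ≠ k → Uhat j ω < Uhat k ω}).toReal * U k)
    (hties : ∀ j k, j ≠ k → P {ω | Uhat j ω = Uhat k ω} = 0)
    (M : Fin m) (hM : ∀ k, U k ≤ U M) :
    0 ≤ U M - u
      ∧ U M - u ≤ (1 / 2) * Real.exp (-(1 / 2))
          * ∑ k ∈ Finset.univ.erase M, Real.sqrt (∑ l, (p l) ^ 2 * (A k l + A M l)) := by
  have hUhat' : ∀ j, Uhat j = stratifiedMean univ (cmesWeight p (π j)) (fun r => N j r.1 r.2)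
      (fun r => Y j r.1 r.2) := fun j => funext fun ω =>
    (hUhat j ω).trans (sum_cmesWeight_mul _ _ fun t l => sampleMean (N j t l) (Y j t l) ω).symm
  have hregret : U M - u
      = ∑ k ∈ univ.erase M, P.real {ω | ∀ j, j ≠ k → Uhat j ω < Uhat k ω} * (U M - U k) := by
    have : Nonempty (Fin m) := ⟨M⟩
    have hUhat_meas : ∀ j, Measurable (Uhat j) := fun j => by
      rw [hUhat' j]; unfold stratifiedMean sampleMean; fun_prop
    rw [hu]
    exact sub_sum_mul_eq_sum_erase_mul_sub (sum_measureReal_forall_lt_eq_one hUhat_meas hties) U M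
  refine ⟨hregret ▸ sum_nonneg fun k _ => mul_nonneg measureReal_nonneg (sub_nonneg.2 (hM k)), ?_⟩
  rw [hregret, mul_sum]
  refine sum_le_sum fun k hk => ?_
  have hkM := ne_of_mem_erase hk
  have hpair := measureReal_stratifiedMean_le_mul_sub_le (Y := fun j r => Y j r.1 r.2)
    (hindep.precomp (g := fun x : (Fin m × Fin 2 × Fin L) × ℕ => (x.1.1, x.1.2.1, x.1.2.2, x.2))
      (by rintro ⟨⟨_, _, _⟩, _⟩ ⟨⟨_, _, _⟩, _⟩ h; simp_all))
    (fun j r i => (hmeas j r.1 r.2 i).aemeasurable) (fun j r i => .of_forall (hrange j r.1 r.2 i))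
    (fun j r => hmean j r.1 r.2) univ (fun j => cmesWeight p (π j))
    (fun j r _ => Nat.one_le_iff_ne_zero.1 (hN j r.1 r.2)) hkM
  rw [← hUhat', ← hUhat', sum_cmesWeight_mul, sum_cmesWeight_mul, ← hU, ← hU, sum_add_distrib,
    sum_cmesWeight_sq_div, sum_cmesWeight_sq_div, ← sum_add_distrib] at hpair
  calc _ ≤ P.real {ω | Uhat M ω ≤ Uhat k ω} * (U M - U k) :=
        mul_le_mul_of_nonneg_right (measureReal_mono fun ω hω => (hω M hkM.symm).le)
          (sub_nonneg.2 (hM k))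
    _ ≤ 1 / 4 * √(∑ l, p l ^ 2 * (A k l + A M l)) := by
        convert hpair using 4
        · norm_num
        · rw [hA, hA]; ring
    _ ≤ _ := by gcongr; exact one_div_four_le_half_mul_exp_neg_half

/-- Under the CMES sampling setup, the regret of the conditional multinomial
empirical success rule satisfies
`0 ≤ U_{M*} − u ≤ (1/2)·e^{−1/2}·Σ_{k≠M*} (Σ_l p_l²·(A_{kl}+A_{M*l}))^{1/2}`. -/
theorem cmes_regret_bound
    {Ω : Type*} [MeasurableSpace Ω] (P : Measure Ω) [IsProbabilityMeasure P]
    (L : ℕ) (hL : 1 ≤ L)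
    (p : Fin L → ℝ) (hp : ∀ l, 0 ≤ p l) (hpsum : ∑ l, p l = 1)
    (m : ℕ) (hm : 1 ≤ m)
    (π : Fin m → Fin L → ℝ) (hπ : ∀ k l, π k l ∈ Set.Icc (0 : ℝ) 1)
    (N : Fin m → Fin 2 → Fin L → ℕ) (hN : ∀ k t l, 1 ≤ N k t l)
    (Y : Fin m → Fin 2 → Fin L → ℕ → Ω → ℝ)
    (hmeas : ∀ k t l i, Measurable (Y k t l i))
    (hrange : ∀ k t l i ω, Y k t l i ω ∈ Set.Icc (0 : ℝ) 1)
    (μ : Fin m → Fin 2 → Fin L → ℝ)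
    (hmean : ∀ k t l i, ∫ ω, Y k t l i ω ∂P = μ k t l)
    (hident : ∀ k t l i j, P.map (Y k t l i) = P.map (Y k t l j))
    (hindep : iIndepFun
      (fun q : Fin m × Fin 2 × Fin L × ℕ => Y q.1 q.2.1 q.2.2.1 q.2.2.2) P)
    (Uhat : Fin m → Ω → ℝ)
    (hUhat : ∀ k ω, Uhat k ω
      = ∑ l, p l *
          ((1 - π k l) * ((N k 0 l : ℝ)⁻¹ * ∑ i ∈ Finset.range (N k 0 l), Y k 0 l i ω)
            + π k l * ((N k 1 l : ℝ)⁻¹ * ∑ i ∈ Finset.range (N k 1 l), Y k 1 l i ω)))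
    (U : Fin m → ℝ)
    (hU : ∀ k, U k = ∑ l, p l * ((1 - π k l) * μ k 0 l + π k l * μ k 1 l))
    (A : Fin m → Fin L → ℝ)
    (hA : ∀ k l, A k l = (1 - π k l) ^ 2 / (N k 0 l : ℝ) + (π k l) ^ 2 / (N k 1 l : ℝ))
    (u : ℝ)
    (hu : u = ∑ k, (P {ω | ∀ j, j ≠ k → Uhat j ω < Uhat k ω}).toReal * U k)
    (hties : ∀ j k, j ≠ k → P {ω | Uhat j ω = Uhat k ω} = 0)
    (M : Fin m) (hM : ∀ k, U k ≤ U M) :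
    0 ≤ U M - u
      ∧ U M - u ≤ (1 / 2) * Real.exp (-(1 / 2))
          * ∑ k ∈ Finset.univ.erase M, Real.sqrt (∑ l, (p l) ^ 2 * (A k l + A M l)) :=
  cmes_regret_bound_general P L p m π N hN Y hmeas hrange μ hmean hindep Uhat hUhat U hU A hA u hu
    hties M hM
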